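/- arXiv:1408.1621 — 2 statements merged into one kernel-verified Lean document; each statement's English description precedes it below -/
import Mathlib

section
/- Let (M,g,f) be an m-quasi-Einstein manifold with λ ≤ 0 and fiber constant μ, where m > 1 and u = e^{-f/m}. If the scalar curvature satisfies R ≥ λn, then (m−1)|∇u|² ≤ −λu² + μ pointwise on M. -/
/-!
Tracing the quasi-Einstein equation and using `R ≥ λn` gives `Δf ≤ |∇f|² / m`. Subtracting the
auxiliary equation turns this into `(1 - 1/m)|∇f|² ≤ -mλ + mμ e^{2f/m}`, and multiplying by
`u² / m` gives the claim, because `|∇u|² = u²|∇f|² / m²` and `u² e^{2f/m} = 1`.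
-/

open Real

lemma sq_exp_neg_div_mul_exp_two_mul_div (f m : ℝ) : exp (-f / m) ^ 2 * exp (2 * f / m) = 1 := by
  rw [← exp_nat_mul, ← exp_add, exp_eq_one_iff]
  ring

lemma mul_sq_div_sq_mul_le_of_sq_mul_eq_one {m u E G lam mu : ℝ} (hm : 0 < m)
    (huE : u ^ 2 * E = 1) (hG : (1 - 1 / m) * G ≤ -(m * lam) + m * mu * E) :
    (m - 1) * (u ^ 2 / m ^ 2 * G) ≤ -lam * u ^ 2 + mu :=
  calc (m - 1) * (u ^ 2 / m ^ 2 * G) = u ^ 2 / m * ((1 - 1 / m) * G) := by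
        field_simp
    _ ≤ u ^ 2 / m * (-(m * lam) + m * mu * E) := by gcongr
    _ = -lam * u ^ 2 + mu * (u ^ 2 * E) := by field_simp
    _ = -lam * u ^ 2 + mu := by rw [huE, mul_one]

theorem quasiEinstein_gradient_inequality_general {M : Type*}
    (n : ℕ) (m lam mu : ℝ) (hm : 1 < m)
    (f u R Δf gradf2 gradu2 : M → ℝ)
    (hu : ∀ x, u x = Real.exp (-f x / m))
    (htrace : ∀ x, R x + Δf x - (1 / m) * gradf2 x = lam * n)
    (hfiber : ∀ x, Δf x - gradf2 x = m * lam - m * mu * Real.exp (2 * f x / m))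
    (hgradu : ∀ x, gradu2 x = (u x) ^ 2 / m ^ 2 * gradf2 x)
    (hR : ∀ x, lam * n ≤ R x) :
    ∀ x, (m - 1) * gradu2 x ≤ -lam * (u x) ^ 2 + mu := by
  intro x
  have hΔf : Δf x ≤ 1 / m * gradf2 x := by linarith [htrace x, hR x]
  have hgradf2 : (1 - 1 / m) * gradf2 x ≤ -(m * lam) + m * mu * exp (2 * f x / m) := by
    linarith [hfiber x]
  rw [hgradu x]
  refine mul_sq_div_sq_mul_le_of_sq_mul_eq_one (by linarith) ?_ hgradf2
  rw [hu x]
  exact sq_exp_neg_div_mul_exp_two_mul_div (f x) m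

/-- On an m-quasi-Einstein manifold with λ ≤ 0, m > 1 and R ≥ λn,
one has (m−1)|∇u|² ≤ −λu² + μ pointwise, where u = e^{-f/m}. -/
theorem quasiEinstein_gradient_inequality {M : Type*}
    (n : ℕ) (m lam mu : ℝ) (hm : 1 < m) (hlam : lam ≤ 0)
    (f u R Δf gradf2 gradu2 : M → ℝ)
    (hu : ∀ x, u x = Real.exp (-f x / m))
    (htrace : ∀ x, R x + Δf x - (1 / m) * gradf2 x = lam * n)
    (hfiber : ∀ x, Δf x - gradf2 x = m * lam - m * mu * Real.exp (2 * f x / m))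
    (hgradu : ∀ x, gradu2 x = (u x) ^ 2 / m ^ 2 * gradf2 x)
    (hgradf2 : ∀ x, 0 ≤ gradf2 x)
    (hR : ∀ x, lam * n ≤ R x) :
    ∀ x, (m - 1) * gradu2 x ≤ -lam * (u x) ^ 2 + mu :=
  quasiEinstein_gradient_inequality_general n m lam mu hm f u R Δf gradf2 gradu2 hu htrace hfiber
    hgradu hR
end

section
/- Let (M,g,f) be a steady m-quasi-Einstein manifold (λ = 0) with m > 1, fiber constant μ > 0, and assume the scalar curvature satisfies R ≥ 0. Then the gradient of u = e^{-f/m} satisfies the uniform bound |∇u|² ≤ μ/(m−1) on all of M. -/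
/-!
Multiplying the traced equation by `m` and subtracting the fiber equation eliminates `Δf`, leaving
`m R + (m - 1)|∇f|² = m² μ e^{2f/m}`; since `R ≥ 0` this bounds `|∇f|²`. As `|∇u|² = u²|∇f|²/m²`
and `u² e^{2f/m} = 1`, the exponential weight cancels and `|∇u|² ≤ μ/(m - 1)`.
-/

open Real

lemma exp_neg_div_sq_mul_exp_two_mul_div (a m : ℝ) : exp (-a / m) ^ 2 * exp (2 * a / m) = 1 := by
  rw [← exp_nat_mul, ← exp_add, ← exp_zero]
  congr 1
  push_cast
  ring

lemma QuasiEinstein.sub_one_mul_gradSq_le {m μ R Δf G E : ℝ} (hm : 1 < m)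
    (htrace : R + Δf - (1 / m) * G = 0) (hfiber : Δf - G = -(m * μ * E)) (hR : 0 ≤ R) :
    (m - 1) * G ≤ m ^ 2 * μ * E := by
  have hm0 : m ≠ 0 := by positivity
  have hcombined : m * R + (m - 1) * G = m ^ 2 * μ * E := by
    field_simp at htrace
    linear_combination htrace - m * hfiber
  nlinarith

theorem steady_quasiEinstein_gradient_bound_general {M : Type*}
    (m mu : ℝ) (hm : 1 < m)
    (f u R Δf gradf2 gradu2 : M → ℝ)
    (hu : ∀ x, u x = Real.exp (-f x / m))
    (htrace : ∀ x, R x + Δf x - (1 / m) * gradf2 x = 0)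
    (hfiber : ∀ x, Δf x - gradf2 x = -(m * mu * Real.exp (2 * f x / m)))
    (hgradu : ∀ x, gradu2 x = (u x) ^ 2 / m ^ 2 * gradf2 x)
    (hR : ∀ x, 0 ≤ R x) :
    ∀ x, gradu2 x ≤ mu / (m - 1) := by
  intro x
  have hm0 : m ≠ 0 := by positivity
  have hgradf := QuasiEinstein.sub_one_mul_gradSq_le hm (htrace x) (hfiber x) (hR x)
  rw [hgradu x, hu x, le_div_iff₀ (by linarith)]
  calc exp (-f x / m) ^ 2 / m ^ 2 * gradf2 x * (m - 1)
      = exp (-f x / m) ^ 2 / m ^ 2 * ((m - 1) * gradf2 x) := by ring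
    _ ≤ exp (-f x / m) ^ 2 / m ^ 2 * (m ^ 2 * mu * exp (2 * f x / m)) := by gcongr
    _ = mu * (exp (-f x / m) ^ 2 * exp (2 * f x / m)) := by field_simp
    _ = mu := by rw [exp_neg_div_sq_mul_exp_two_mul_div, mul_one]

/-- On a steady (λ = 0) m-quasi-Einstein manifold with m > 1, fiber constant
μ > 0 and R ≥ 0, the gradient of u = e^{-f/m} satisfies |∇u|² ≤ μ/(m−1). -/
theorem steady_quasiEinstein_gradient_bound {M : Type*}
    (n : ℕ) (m mu : ℝ) (hm : 1 < m) (hmu : 0 < mu)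
    (f u R Δf gradf2 gradu2 : M → ℝ)
    (hu : ∀ x, u x = Real.exp (-f x / m))
    (htrace : ∀ x, R x + Δf x - (1 / m) * gradf2 x = 0)
    (hfiber : ∀ x, Δf x - gradf2 x = -(m * mu * Real.exp (2 * f x / m)))
    (hgradu : ∀ x, gradu2 x = (u x) ^ 2 / m ^ 2 * gradf2 x)
    (hgradf2 : ∀ x, 0 ≤ gradf2 x)
    (hR : ∀ x, 0 ≤ R x) :
    ∀ x, gradu2 x ≤ mu / (m - 1) :=
  steady_quasiEinstein_gradient_bound_general m mu hm f u R Δf gradf2 gradu2 hu htrace hfiber hgradu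
    hR
end
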